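/- Let stNum, c, n be integers with c < stNum and stNum > 1, and let exe be a Boolean. Execute the initEventQueue program: define exe' = true if c = 0 and exe' = false otherwise; define n' = 0 if c = 0 and n' = n otherwise; define a = c; define c' = 0 if c = stNum - 1 and c' = a + 1 otherwise; and set x = c'. Then either (x = 1 and exe' = true and n' = 0), or ((x = 0 or x = a + 1) and exe' = false). -/

import Mathlib

theorem initEventQueue_correct_general (stNum c n : ℤ)
    (h2 : stNum > 1) :
    let exe' : Bool := if c = 0 then true else false
    let n' : ℤ := if c = 0 then 0 else n
    let a : ℤ := c
    let c' : ℤ := if c = stNum - 1 then 0 else a + 1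
    let x : ℤ := c'
    (x = 1 ∧ exe' = true ∧ n' = 0) ∨ ((x = 0 ∨ x = a + 1) ∧ exe' = false) := by
  intro exe' n' a c' x
  by_cases hc : c = 0
  · -- cycle 0 is never the last one, because there are at least two statecharts
    have hnot_last : c ≠ stNum - 1 := by omega
    left
    simp only [x, c', a, exe', n', if_pos hc, if_neg hnot_last, hc]
    simp
  · right
    refine ⟨?_, by simp [exe', hc]⟩
    by_cases hlast : c = stNum - 1 <;> simp [x, c', a, hlast]

/-- Lemma 1: correctness of the `initEventQueue` program of the two-way
communication model pattern, expressed as a Hoare triple on the deterministic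
state transformer. -/
theorem initEventQueue_correct (stNum c n : ℤ) (exe : Bool)
    (h1 : c < stNum) (h2 : stNum > 1) :
    let exe' : Bool := if c = 0 then true else false
    let n' : ℤ := if c = 0 then 0 else n
    let a : ℤ := c
    let c' : ℤ := if c = stNum - 1 then 0 else a + 1
    let x : ℤ := c'
    (x = 1 ∧ exe' = true ∧ n' = 0) ∨ ((x = 0 ∨ x = a + 1) ∧ exe' = false) :=
  initEventQueue_correct_general stNum c n h2
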